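/- arXiv:1105.3187 — 2 statements merged into one kernel-verified Lean document; each statement's English description precedes it below -/
import Mathlib

section
/- Let (D_t) = (𝔸_{r(t)}) be a canonical domain system and (f_t) a Loewner chain over (D_t). Set 𝒰 := {(w,t) : t ≥ 0, w ∈ f_t(D_t)} and 𝒟 := {(z,t) : t ≥ 0, z ∈ D_t}. If K is a compact subset of 𝒰, then K̂ := {(f_t^{-1}(w), t) : (w,t) ∈ K} is a compact subset of 𝒟. -/
open MeasureTheory Set Filter Metric
open scoped ENNReal NNReal Topology

noncomputable section

/-- The annulus `𝔸_r = {z : r < |z| < 1}`.  For `r = 0` this is the punctured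
unit disk `𝔻*`. -/
def stdAnnulus (r : ℝ) : Set ℂ := {z : ℂ | r < ‖z‖ ∧ ‖z‖ < 1}

/-- The exterior of the closed unit disk, `ℂ ∖ cl 𝔻`. -/
def extDisk : Set ℂ := {z : ℂ | 1 < ‖z‖}

/-- The punctured plane `ℂ* = ℂ ∖ {0}`. -/
def punctPlane : Set ℂ := {z : ℂ | z ≠ 0}

/-- `ω(r) = -π / log r` for `r ∈ (0,1)`, and `ω(0) = 0`. -/
def omegaFun (r : ℝ) : ℝ := if r = 0 then 0 else -Real.pi / Real.log r

/-- `f ∈ AC^d([0,∞))`: `f` is locally absolutely continuous on `[0,∞)` with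
(a.e.) derivative of class `L^d_loc`; the derivative is represented by a
function `g` via the fundamental theorem of calculus. -/
def ACd (d : ℝ≥0∞) (f : ℝ → ℝ) : Prop :=
  ∃ g : ℝ → ℝ,
    (∀ T : ℝ, 0 < T → MemLp g d (volume.restrict (Icc (0:ℝ) T))) ∧
    ∀ a b : ℝ, 0 ≤ a → a ≤ b → f b - f a = ∫ t in a..b, g t

/-- A (doubly connected) canonical domain system of order `d`: a family of
annuli `D_t = 𝔸_{r t}` such that `t ↦ ω(r t)` is non-increasing and of class
`AC^d` on `[0,∞)`. -/
structure CanonicalDomainSystem (d : ℝ≥0∞) where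
  r : ℝ → ℝ
  r_nonneg : ∀ t : ℝ, 0 ≤ t → 0 ≤ r t
  r_lt_one : ∀ t : ℝ, 0 ≤ t → r t < 1
  omega_anti : ∀ ⦃s t : ℝ⦄, 0 ≤ s → s ≤ t → omegaFun (r t) ≤ omegaFun (r s)
  omega_ACd : ACd d fun t => omegaFun (r t)

/-- A Loewner chain of order `d` over the canonical domain system `D`. -/
structure IsLoewnerChain (d : ℝ≥0∞) (D : CanonicalDomainSystem d) (f : ℝ → ℂ → ℂ) : Prop where
  holo : ∀ t : ℝ, 0 ≤ t → DifferentiableOn ℂ (f t) (stdAnnulus (D.r t))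
  inj : ∀ t : ℝ, 0 ≤ t → InjOn (f t) (stdAnnulus (D.r t))
  mono : ∀ ⦃s t : ℝ⦄, 0 ≤ s → s ≤ t →
    f s '' stdAnnulus (D.r s) ⊆ f t '' stdAnnulus (D.r t)
  lc3 : ∀ S T : ℝ, 0 ≤ S → S ≤ T → ∀ K : Set ℂ, IsCompact K → K ⊆ stdAnnulus (D.r S) →
    ∃ k : ℝ → ℝ, (∀ x, 0 ≤ k x) ∧ MemLp k d (volume.restrict (Icc S T)) ∧
      ∀ z ∈ K, ∀ s t : ℝ, S ≤ s → s ≤ t → t ≤ T →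
        ‖f s z - f t z‖ ≤ ∫ ξ in s..t, k ξ

/-- An evolution family of order `d` over the canonical domain system `D`. -/
structure IsEvolutionFamily (d : ℝ≥0∞) (D : CanonicalDomainSystem d)
    (φ : ℝ → ℝ → ℂ → ℂ) : Prop where
  holo : ∀ ⦃s t : ℝ⦄, 0 ≤ s → s ≤ t → DifferentiableOn ℂ (φ s t) (stdAnnulus (D.r s))
  mapsTo : ∀ ⦃s t : ℝ⦄, 0 ≤ s → s ≤ t →
    MapsTo (φ s t) (stdAnnulus (D.r s)) (stdAnnulus (D.r t))
  ef1 : ∀ s : ℝ, 0 ≤ s → ∀ z ∈ stdAnnulus (D.r s), φ s s z = z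
  ef2 : ∀ ⦃s u t : ℝ⦄, 0 ≤ s → s ≤ u → u ≤ t → ∀ z ∈ stdAnnulus (D.r s),
    φ s t z = φ u t (φ s u z)
  ef3 : ∀ S T : ℝ, 0 ≤ S → S ≤ T → ∀ z ∈ stdAnnulus (D.r S),
    ∃ k : ℝ → ℝ, (∀ x, 0 ≤ k x) ∧ MemLp k d (volume.restrict (Icc S T)) ∧
      ∀ s u t : ℝ, S ≤ s → s ≤ u → u ≤ t → t ≤ T →
        ‖φ s u z - φ s t z‖ ≤ ∫ ξ in u..t, k ξ

/-- The domain `𝒟 = {(z,t) : t ≥ 0, z ∈ D_t}` of a weak holomorphic vector field. -/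
def vfDomain {d : ℝ≥0∞} (D : CanonicalDomainSystem d) : Set (ℂ × ℝ) :=
  {p : ℂ × ℝ | 0 ≤ p.2 ∧ p.1 ∈ stdAnnulus (D.r p.2)}

/-- A weak holomorphic vector field of order `d` over `D` (we regard `G` as a
function of `(z, t)` written `G z t`). -/
structure IsWeakHolVF (d : ℝ≥0∞) (D : CanonicalDomainSystem d) (G : ℂ → ℝ → ℂ) : Prop where
  meas : ∀ z : ℂ, Measurable fun t : {t : ℝ // 0 ≤ t ∧ z ∈ stdAnnulus (D.r t)} => G z t.1
  holo : ∀ t : ℝ, 0 ≤ t → DifferentiableOn ℂ (fun z => G z t) (stdAnnulus (D.r t))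
  bound : ∀ K : Set (ℂ × ℝ), IsCompact K → K ⊆ vfDomain D →
    ∃ k : ℝ → ℝ, (∀ x, 0 ≤ k x) ∧ MemLp k d (volume.restrict (Prod.snd '' K)) ∧
      ∀ p ∈ K, ‖G p.1 p.2‖ ≤ k p.2

/-- `G` is semicomplete: for every initial condition the Carathéodory initial
value problem (in integral form) has a solution defined on all of `[s,∞)`. -/
def IsSemicomplete {d : ℝ≥0∞} (D : CanonicalDomainSystem d) (G : ℂ → ℝ → ℂ) : Prop :=
  ∀ s : ℝ, 0 ≤ s → ∀ z ∈ stdAnnulus (D.r s),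
    ∃ w : ℝ → ℂ, w s = z ∧ (∀ t : ℝ, s ≤ t → w t ∈ stdAnnulus (D.r t)) ∧
      ∀ t : ℝ, s ≤ t → w t = z + ∫ ξ in s..t, G (w ξ) ξ

/-- `γ` is a closed curve (parametrized by `[0,1]`) contained in `A`. -/
def IsClosedCurveIn (γ : ℝ → ℂ) (A : Set ℂ) : Prop :=
  ContinuousOn γ (Icc 0 1) ∧ γ 0 = γ 1 ∧ ∀ t ∈ Icc (0:ℝ) 1, γ t ∈ A

/-- The closed curve `γ` has index (winding number) `n` about the point `w`,
expressed via a continuous logarithm of `γ - w`. -/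
def HasWindingNumber (γ : ℝ → ℂ) (w : ℂ) (n : ℤ) : Prop :=
  ∃ g : ℝ → ℂ, ContinuousOn g (Icc 0 1) ∧
    (∀ t ∈ Icc (0:ℝ) 1, γ t - w = Complex.exp (g t)) ∧
    g 1 - g 0 = 2 * Real.pi * Complex.I * n

/-- `I(f ∘ γ) = I(γ)` for every closed curve `γ` in `A`: `f` preserves the
index about the origin of closed curves in `A`. -/
def PreservesWinding (f : ℂ → ℂ) (A : Set ℂ) : Prop :=
  ∀ γ : ℝ → ℂ, IsClosedCurveIn γ A → ∀ n : ℤ,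
    (HasWindingNumber γ 0 n ↔ HasWindingNumber (fun t => f (γ t)) 0 n)

/-- The Loewner chain `f` is associated with the evolution family `φ`:
`f_s = f_t ∘ φ_{s,t}`. -/
def AssociatedLC {d : ℝ≥0∞} (D : CanonicalDomainSystem d) (f : ℝ → ℂ → ℂ)
    (φ : ℝ → ℝ → ℂ → ℂ) : Prop :=
  ∀ s t : ℝ, 0 ≤ s → s ≤ t → ∀ z ∈ stdAnnulus (D.r s), f s z = f t (φ s t z)

/-- The union `⋃_{t ≥ 0} f_t(D_t)` of the ranges of a Loewner chain. -/
def chainUnion {d : ℝ≥0∞} (D : CanonicalDomainSystem d) (f : ℝ → ℂ → ℂ) : Set ℂ :=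
  ⋃ t ∈ Ici (0:ℝ), f t '' stdAnnulus (D.r t)

/-- The evolution family `φ` has Loewner range `Ω`, i.e. there is an associated
Loewner chain, preserving winding numbers, whose union of ranges is `Ω`.
(Taking `Ω = 𝔸_ρ`, `𝔻*`, `ℂ ∖ cl 𝔻`, `ℂ*`, this defines the conformal types
I, II, III, IV respectively.) -/
def HasConformalType {d : ℝ≥0∞} (D : CanonicalDomainSystem d) (φ : ℝ → ℝ → ℂ → ℂ)
    (Ω : Set ℂ) : Prop :=
  ∃ f : ℝ → ℂ → ℂ, IsLoewnerChain d D f ∧ AssociatedLC D f φ ∧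
    (∀ t : ℝ, 0 ≤ t → PreservesWinding (f t) (stdAnnulus (D.r t))) ∧
    chainUnion D f = Ω

/-- `φ s t → 0` as `t → +∞`, uniformly on compact subsets of `D_s`. -/
def ConvergesToZeroOnCompacta {d : ℝ≥0∞} (D : CanonicalDomainSystem d)
    (φ : ℝ → ℝ → ℂ → ℂ) (s : ℝ) : Prop :=
  ∀ K : Set ℂ, IsCompact K → K ⊆ stdAnnulus (D.r s) →
    TendstoUniformlyOn (fun t z => φ s t z) (fun _ => 0) atTop K

/-- `N(f)`: the free term of the Laurent expansion of `f`, holomorphic on the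
annulus `𝔸_r`, computed as a mean value over the circle of radius `(1+r)/2`. -/
def freeTerm (r : ℝ) (f : ℂ → ℂ) : ℂ :=
  (2 * Real.pi : ℂ)⁻¹ *
    ∫ θ in (0:ℝ)..(2 * Real.pi), f ((((1 + r) / 2 : ℝ) : ℂ) * Complex.exp (θ * Complex.I))

/-- The Villat kernel `K_r`. -/
def villatKernel (r : ℝ) (z : ℂ) : ℂ :=
  (1 + z) / (1 - z) +
    ∑' ν : ℕ,
      ((1 + (r : ℂ) ^ (2 * (ν + 1)) * z) / (1 - (r : ℂ) ^ (2 * (ν + 1)) * z) +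
        (1 + z / (r : ℂ) ^ (2 * (ν + 1))) / (1 - z / (r : ℂ) ^ (2 * (ν + 1))))

/-- The class `V_r`: for `r ∈ (0,1)`, holomorphic functions on `𝔸_r` given by
the Villat-kernel representation with a pair of positive Borel measures on the
unit circle of total mass one; for `r = 0`, the (normalized) Carathéodory class
on the unit disk. -/
def MemClassV (r : ℝ) (p : ℂ → ℂ) : Prop :=
  (r = 0 →
    DifferentiableOn ℂ p (ball (0:ℂ) 1) ∧ p 0 = 1 ∧ ∀ z ∈ ball (0:ℂ) 1, 0 < (p z).re) ∧
  (r ≠ 0 →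
    DifferentiableOn ℂ p (stdAnnulus r) ∧
    ∃ μ₁ μ₂ : Measure ℂ,
      μ₁ {ξ : ℂ | ‖ξ‖ ≠ 1} = 0 ∧ μ₂ {ξ : ℂ | ‖ξ‖ ≠ 1} = 0 ∧
      μ₁ univ + μ₂ univ = 1 ∧
      ∀ z ∈ stdAnnulus r,
        p z = (∫ ξ, villatKernel r (z / ξ) ∂μ₁) +
          ∫ ξ, (1 - villatKernel r ((r : ℂ) * ξ / z)) ∂μ₂)

/-! `K̂` is the image of `K` under `(w, t) ↦ (f_t⁻¹ w, t)`, so it suffices that this map is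
continuous on `𝒰`. Let `f_{tₙ}(zₙ) → f_t(z)` with `tₙ → t`. Since `ω ∘ r` is continuous and `ω` is
increasing, a small closed disc `B` about `z` lies in `D_s` for all `s ≥ S`, where `S ≤ t` and
eventually `tₙ ≥ S`; then (LC3) makes `f_{tₙ} → f_t` uniformly on `B`. Injectivity of `f_t` bounds
`|f_t - f_t(z)|` below on `∂B`, so by the open mapping estimate `f_{tₙ}(B)` contains `f_{tₙ}(zₙ)`
for large `n`, and injectivity of `f_{tₙ}` puts `zₙ` in `B`. -/

lemma closedBall_subset_stdAnnulus {z : ℂ} {ε ρ : ℝ} (hρ : ρ < ‖z‖ - ε) (h1 : ‖z‖ + ε < 1) :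
    closedBall z ε ⊆ stdAnnulus ρ := by
  intro ζ hζ
  have hζz : ‖ζ - z‖ ≤ ε := mem_closedBall_iff_norm.1 hζ
  have hlower := norm_le_norm_add_norm_sub' z ζ
  have hupper := norm_le_norm_add_norm_sub' ζ z
  rw [norm_sub_rev] at hlower
  exact ⟨by linarith, by linarith⟩

lemma eventually_mem_image_closedBall {ι : Type*} {l : Filter ι} {F : ι → ℂ → ℂ} {g : ℂ → ℂ}
    {w : ι → ℂ} {z : ℂ} {ε : ℝ} (hε : 0 < ε)
    (hF : ∀ᶠ i in l, DifferentiableOn ℂ (F i) (closedBall z ε) ∧ InjOn (F i) (closedBall z ε))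
    (hFg : TendstoUniformlyOn F g l (closedBall z ε)) (hg : ContinuousOn g (sphere z ε))
    (hgz : ∀ ζ ∈ sphere z ε, g ζ ≠ g z) (hw : Tendsto w l (𝓝 (g z))) :
    ∀ᶠ i in l, w i ∈ F i '' closedBall z ε := by
  obtain ⟨ζ₀, hζ₀, hmin⟩ := (isCompact_sphere z ε).exists_isMinOn
    (NormedSpace.sphere_nonempty.2 hε.le) (hg.sub continuousOn_const).norm
  have hm : 0 < ‖g ζ₀ - g z‖ := norm_pos_iff.2 (sub_ne_zero.2 (hgz ζ₀ hζ₀))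
  set m := ‖g ζ₀ - g z‖
  rw [Metric.tendstoUniformlyOn_iff] at hFg
  filter_upwards [hF, hFg (m / 8) (by positivity),
    hw.eventually (ball_mem_nhds _ (by positivity : 0 < m / 8))] with i ⟨hdiff, hinj⟩ hclose hwi
  have hcenter : ‖g z - F i z‖ < m / 8 := by
    simpa [dist_eq_norm] using hclose z (mem_closedBall_self hε.le)
  have hsphere : ∀ ζ ∈ sphere z ε, 3 * m / 4 ≤ ‖F i ζ - F i z‖ := by
    intro ζ hζ
    have hgζ : m ≤ ‖g ζ - g z‖ := hmin hζ
    have hFζ : ‖g ζ - F i ζ‖ < m / 8 := by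
      simpa [dist_eq_norm] using hclose ζ (sphere_subset_closedBall hζ)
    have h1 := norm_sub_le_norm_sub_add_norm_sub (g ζ) (F i ζ) (g z)
    have h2 := norm_sub_le_norm_sub_add_norm_sub (F i ζ) (F i z) (g z)
    rw [norm_sub_rev (F i z)] at h2
    linarith
  have hnonconst : ∃ᶠ ζ in 𝓝 z, F i ζ ≠ F i z := by
    refine Frequently.filter_mono (Eventually.frequently ?_) (nhdsWithin_le_nhds (s := {z}ᶜ))
    filter_upwards [self_mem_nhdsWithin, nhdsWithin_le_nhds (closedBall_mem_nhds z hε)]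
      with ζ hζz hζ
    exact fun h => hζz (hinj hζ (mem_closedBall_self hε.le) h)
  refine (hdiff.diffContOnCl_ball subset_rfl).ball_subset_image_closedBall hε hsphere hnonconst ?_
  rw [mem_ball, dist_eq_norm]
  have := norm_sub_le_norm_sub_add_norm_sub (w i) (g z) (F i z)
  rw [dist_eq_norm] at hwi
  linarith

lemma omegaFun_strictMonoOn : StrictMonoOn omegaFun (Ico 0 1) := by
  intro x hx y hy hxy
  have hy0 : 0 < y := hx.1.trans_lt hxy
  have hlogy : Real.log y < 0 := Real.log_neg hy0 hy.2
  rw [omegaFun, omegaFun, if_neg hy0.ne']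
  split_ifs with hx0
  · exact div_pos_of_neg_of_neg (neg_neg_of_pos Real.pi_pos) hlogy
  · have hx0' : 0 < x := lt_of_le_of_ne hx.1 (Ne.symm hx0)
    have hlogx : Real.log x < 0 := Real.log_neg hx0' (hxy.trans hy.2)
    rw [← neg_div_neg_eq, neg_neg, ← neg_div_neg_eq (-Real.pi), neg_neg]
    exact div_lt_div_of_pos_left Real.pi_pos (by linarith) (by linarith [Real.log_lt_log hx0' hxy])

lemma ACd.continuousOn {d : ℝ≥0∞} (hd : 1 ≤ d) {F : ℝ → ℝ} (hF : ACd d F) :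
    ContinuousOn F (Ici 0) := by
  obtain ⟨g, hg, hFg⟩ := hF
  intro x hx
  have hT : 0 < x + 1 := by linarith [mem_Ici.1 hx]
  have hint : IntervalIntegrable g volume 0 (x + 1) :=
    IntegrableOn.intervalIntegrable (by rw [uIcc_of_le hT.le]; exact (hg _ hT).integrable hd)
  have hprim : ContinuousOn (fun y => F 0 + ∫ s in (0:ℝ)..y, g s) (Icc 0 (x + 1)) := by
    have := intervalIntegral.continuousOn_primitive_interval' hint left_mem_uIcc
    rw [uIcc_of_le hT.le] at this
    exact continuousOn_const.add this
  have hEq : EqOn F (fun y => F 0 + ∫ s in (0:ℝ)..y, g s) (Icc 0 (x + 1)) := fun y hy => by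
    linarith [hFg 0 y le_rfl hy.1]
  refine ((hprim.congr hEq) x ⟨hx, by linarith⟩).mono_of_mem_nhdsWithin ?_
  exact inter_mem_nhdsWithin _ (Iic_mem_nhds (by linarith))

namespace CanonicalDomainSystem

variable {d : ℝ≥0∞} (D : CanonicalDomainSystem d)

lemma r_mem_Ico {t : ℝ} (ht : 0 ≤ t) : D.r t ∈ Ico 0 1 := ⟨D.r_nonneg t ht, D.r_lt_one t ht⟩

lemma r_antitone {s t : ℝ} (hs : 0 ≤ s) (hst : s ≤ t) : D.r t ≤ D.r s :=
  (omegaFun_strictMonoOn.le_iff_le (D.r_mem_Ico (hs.trans hst)) (D.r_mem_Ico hs)).1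
    (D.omega_anti hs hst)

lemma exists_r_lt (hd : 1 ≤ d) {t c : ℝ} (ht : 0 ≤ t) (hc : D.r t < c) (hc1 : c < 1) :
    ∃ S, 0 ≤ S ∧ D.r S < c ∧ ∀ᶠ s in 𝓝[Ici 0] t, S ≤ s := by
  have hc0 : 0 ≤ c := (D.r_nonneg t ht).trans hc.le
  have hω : ∀ᶠ s in 𝓝[Ici 0] t, omegaFun (D.r s) < omegaFun c :=
    (D.omega_ACd.continuousOn hd t ht).eventually_lt_const
      (omegaFun_strictMonoOn (D.r_mem_Ico ht) ⟨hc0, hc1⟩ hc)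
  obtain ⟨δ, hδ, hball⟩ := Metric.mem_nhdsWithin_iff.1 hω
  have hS : max 0 (t - δ / 2) ∈ ball t δ ∩ Ici 0 := by
    refine ⟨?_, mem_Ici.2 (le_max_left _ _)⟩
    rw [Real.ball_eq_Ioo, mem_Ioo]
    exact ⟨lt_max_of_lt_right (by linarith), max_lt (by linarith) (by linarith)⟩
  refine ⟨_, hS.2, (omegaFun_strictMonoOn.lt_iff_lt (D.r_mem_Ico hS.2) ⟨hc0, hc1⟩).1 (hball hS), ?_⟩
  filter_upwards [self_mem_nhdsWithin,
    nhdsWithin_le_nhds (eventually_gt_nhds (by linarith : t - δ / 2 < t))] with s hs hs'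
  exact max_le hs hs'.le

end CanonicalDomainSystem

def chainInv {d : ℝ≥0∞} (D : CanonicalDomainSystem d) (f : ℝ → ℂ → ℂ) (q : ℂ × ℝ) : ℂ × ℝ :=
  (Function.invFunOn (f q.2) (stdAnnulus (D.r q.2)) q.1, q.2)

lemma chainInv_spec {d : ℝ≥0∞} {D : CanonicalDomainSystem d} {f : ℝ → ℂ → ℂ} {q : ℂ × ℝ}
    (hq : q.1 ∈ f q.2 '' stdAnnulus (D.r q.2)) :
    (chainInv D f q).1 ∈ stdAnnulus (D.r q.2) ∧ f q.2 (chainInv D f q).1 = q.1 :=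
  ⟨Function.invFunOn_mem hq, Function.invFunOn_eq hq⟩

namespace IsLoewnerChain

variable {d : ℝ≥0∞} {D : CanonicalDomainSystem d} {f : ℝ → ℂ → ℂ}

lemma tendstoUniformlyOn (hd : 1 ≤ d) (hf : IsLoewnerChain d D f) {S t : ℝ} (hS : 0 ≤ S)
    (hSt : S ≤ t) {B : Set ℂ} (hB : IsCompact B) (hBS : B ⊆ stdAnnulus (D.r S)) :
    TendstoUniformlyOn f (f t) (𝓝[Ici S] t) B := by
  obtain ⟨k, -, hk, hbound⟩ := hf.lc3 S (t + 1) hS (by linarith) B hB hBS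
  have hIcc : uIcc S (t + 1) = Icc S (t + 1) := uIcc_of_le (by linarith)
  have hint : IntervalIntegrable k volume S (t + 1) :=
    IntegrableOn.intervalIntegrable (by rw [hIcc]; exact hk.integrable hd)
  have hprim : ContinuousWithinAt (fun s => ∫ ξ in t..s, k ξ) (Ici S) t := by
    have ht : t ∈ Icc S (t + 1) := ⟨hSt, by linarith⟩
    have := intervalIntegral.continuousOn_primitive_interval' hint (hIcc ▸ ht)
    rw [hIcc] at this
    exact (this t ht).mono_of_mem_nhdsWithin
      (inter_mem_nhdsWithin _ (Iic_mem_nhds (by linarith)))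
  have hsmall : Tendsto (fun s => |∫ ξ in t..s, k ξ|) (𝓝[Ici S] t) (𝓝 0) := by
    simpa using hprim.tendsto.abs
  rw [Metric.tendstoUniformlyOn_iff]
  intro ε hε
  filter_upwards [self_mem_nhdsWithin, hsmall.eventually_lt_const hε,
    nhdsWithin_le_nhds (eventually_le_nhds (lt_add_one t))] with s hSs hs hsT z hz
  refine lt_of_le_of_lt ?_ hs
  rw [dist_eq_norm]
  rcases le_total s t with hst | hts
  · rw [intervalIntegral.integral_symm, abs_neg, norm_sub_rev]
    exact (hbound z hz s t hSs hst (by linarith)).trans (le_abs_self _)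
  · exact (hbound z hz t s hSt hts hsT).trans (le_abs_self _)

lemma tendsto_of_tendsto_apply (hd : 1 ≤ d) (hf : IsLoewnerChain d D f) {t : ℝ} (ht : 0 ≤ t)
    {z : ℂ} (hz : z ∈ stdAnnulus (D.r t)) {ι : Type*} {l : Filter ι} {τ : ι → ℝ} {ζ : ι → ℂ}
    (hζ : ∀ᶠ i in l, 0 ≤ τ i ∧ ζ i ∈ stdAnnulus (D.r (τ i))) (hτ : Tendsto τ l (𝓝 t))
    (hfζ : Tendsto (fun i => f (τ i) (ζ i)) l (𝓝 (f t z))) :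
    Tendsto ζ l (𝓝 z) := by
  rw [Metric.nhds_basis_closedBall.tendsto_right_iff]
  intro δ hδ
  set ε := min δ (min ((‖z‖ - D.r t) / 2) ((1 - ‖z‖) / 2))
  have hε : 0 < ε := lt_min hδ (lt_min (by linarith [hz.1]) (by linarith [hz.2]))
  have hεz : ε ≤ (‖z‖ - D.r t) / 2 := (min_le_right _ _).trans (min_le_left _ _)
  have hεz' : ε ≤ (1 - ‖z‖) / 2 := (min_le_right _ _).trans (min_le_right _ _)
  obtain ⟨S, hS, hrS, hτS⟩ :=
    D.exists_r_lt hd ht (by linarith [hz.1] : D.r t < ‖z‖ - ε) (by linarith [hz.1, D.r_nonneg t ht])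
  have hSt : S ≤ t := hτS.self_of_nhdsWithin ht
  have hB : ∀ s, 0 ≤ s → S ≤ s → closedBall z ε ⊆ stdAnnulus (D.r s) := fun s hs hSs =>
    closedBall_subset_stdAnnulus ((D.r_antitone hS hSs).trans_lt hrS) (by linarith)
  have hSτ : ∀ᶠ i in l, S ≤ τ i :=
    (tendsto_nhdsWithin_iff.2 ⟨hτ, hζ.mono fun i hi => hi.1⟩).eventually hτS
  have hunif : TendstoUniformlyOn (fun i => f (τ i)) (f t) l (closedBall z ε) := fun u hu =>
    (tendsto_nhdsWithin_iff.2 ⟨hτ, hSτ⟩).eventually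
      (hf.tendstoUniformlyOn hd hS hSt (isCompact_closedBall z ε) (hB S hS le_rfl) u hu)
  have hBt := hB t ht hSt
  have hsurj := eventually_mem_image_closedBall hε (F := fun i => f (τ i)) ?_ hunif
    ((hf.holo t ht).continuousOn.mono (sphere_subset_closedBall.trans hBt)) ?_ hfζ
  · filter_upwards [hsurj, hζ, hSτ] with i ⟨ξ, hξ, hfξ⟩ ⟨hτi, hζi⟩ hSi
    rw [hf.inj _ hτi hζi (hB _ hτi hSi hξ) hfξ.symm]
    exact closedBall_subset_closedBall (min_le_left _ _) hξ
  · filter_upwards [hζ, hSτ] with i ⟨hτi, _⟩ hSi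
    exact ⟨(hf.holo _ hτi).mono (hB _ hτi hSi), (hf.inj _ hτi).mono (hB _ hτi hSi)⟩
  · intro ξ hξ heq
    rw [hf.inj t ht (hBt (sphere_subset_closedBall hξ)) (hBt (mem_closedBall_self hε.le)) heq,
      mem_sphere, dist_self] at hξ
    exact hε.ne hξ

lemma continuousOn_chainInv (hd : 1 ≤ d) (hf : IsLoewnerChain d D f) :
    ContinuousOn (chainInv D f) {q : ℂ × ℝ | 0 ≤ q.2 ∧ q.1 ∈ f q.2 '' stdAnnulus (D.r q.2)} := by
  rintro q ⟨hq0, hq⟩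
  obtain ⟨hmem, hfq⟩ := chainInv_spec hq
  refine Tendsto.prodMk_nhds ?_ continuous_snd.continuousWithinAt
  refine hf.tendsto_of_tendsto_apply hd hq0 hmem ?_ continuous_snd.continuousWithinAt ?_
  · exact eventually_nhdsWithin_of_forall fun p hp => ⟨hp.1, (chainInv_spec hp.2).1⟩
  · rw [hfq]
    refine continuous_fst.continuousWithinAt.congr' ?_
    exact eventually_nhdsWithin_of_forall fun p hp => ((chainInv_spec hp.2).2).symm

end IsLoewnerChain

/-- Lemma 2.2: the preimage under the chain of a compact subset of
`𝒰 = {(w,t) : w ∈ f_t(D_t)}` is a compact subset of `𝒟`. -/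
theorem loewnerChain_compact_preimage
    (d : ℝ≥0∞) (hd : 1 ≤ d) (D : CanonicalDomainSystem d) (f : ℝ → ℂ → ℂ)
    (hf : IsLoewnerChain d D f)
    (K : Set (ℂ × ℝ)) (hK : IsCompact K)
    (hKU : K ⊆ {p : ℂ × ℝ | 0 ≤ p.2 ∧ p.1 ∈ f p.2 '' stdAnnulus (D.r p.2)}) :
    IsCompact {p : ℂ × ℝ | p.1 ∈ stdAnnulus (D.r p.2) ∧ (f p.2 p.1, p.2) ∈ K} ∧
      {p : ℂ × ℝ | p.1 ∈ stdAnnulus (D.r p.2) ∧ (f p.2 p.1, p.2) ∈ K} ⊆ vfDomain D := by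
  have himage : {p : ℂ × ℝ | p.1 ∈ stdAnnulus (D.r p.2) ∧ (f p.2 p.1, p.2) ∈ K} =
      chainInv D f '' K := by
    ext p
    constructor
    · rintro ⟨hz, hpK⟩
      refine ⟨(f p.2 p.1, p.2), hpK, ?_⟩
      simp only [chainInv, (hf.inj p.2 (hKU hpK).1).leftInvOn_invFunOn hz]
    · rintro ⟨q, hqK, rfl⟩
      obtain ⟨hmem, hfq⟩ := chainInv_spec (hKU hqK).2
      refine ⟨hmem, ?_⟩
      show (f q.2 (chainInv D f q).1, q.2) ∈ K
      rwa [hfq]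
  refine ⟨himage ▸ hK.image_of_continuousOn ((hf.continuousOn_chainInv hd).mono hKU), ?_⟩
  rintro p ⟨hz, hpK⟩
  exact ⟨(hKU hpK).1, hz⟩
end
end

section
/- Let r ∈ (0,1) and let f : 𝔸_r → ℂ∖{0} be an injective holomorphic function such that I(f∘γ) = I(γ) for every closed curve γ ⊂ 𝔸_r. Then for all R and z with r < R < |z| < 1, the point f(z) lies in the exterior of the Jordan curve f(C(0,R)); that is, ind(f∘C(0,R), f(z)) = 0, where C(0,R) := {ζ ∈ ℂ : |ζ| = R} is the circle of radius R about 0. -/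
open MeasureTheory Set Filter Metric
open scoped ENNReal NNReal Topology

noncomputable section

open Complex
open scoped Real

/-!
Write `n(q)` for the index of `f ∘ C(0, R)` about `q`, computed by the argument principle.
Since `f` is injective, `f(w)` avoids the curve while `w` ranges over either of the two
(connected) components of `𝔸_r ∖ C(0, R)`, so `n(f w)` takes one value `a` outside the circle
and one value `b` inside it; pushing the circle across a point `w` shows `b - a` is the order
of the zero of `f - f w` at `w`, hence `a < b`. By the maximum principle for `f` and `1 / f`,
`|f|` exceeds its maximum on `C(0, R)` at some point of `𝔸_r` and falls below its minimum at
another; the index is `0` at the image of the first point and `I(f ∘ C(0, R)) = 1` at the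
image of the second. So `{0, 1} ⊆ {a, b}`, and `a < b` forces `a = 0`.
-/

theorem HasWindingNumber.unique {γ : ℝ → ℂ} {w : ℂ} {m n : ℤ}
    (hm : HasWindingNumber γ w m) (hn : HasWindingNumber γ w n) : m = n := by
  obtain ⟨g, hgc, hge, hg⟩ := hm
  obtain ⟨g', hgc', hge', hg'⟩ := hn
  have hdiff : MapsTo (fun t => g t - g' t) (Icc 0 1) (AddSubgroup.zmultiples (2 * π * I)) := by
    intro t ht
    obtain ⟨k, hk⟩ := exp_eq_exp_iff_exists_int.1 ((hge t ht).symm.trans (hge' t ht))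
    exact ⟨k, by simp [hk]⟩
  have hconst := isPreconnected_Icc.constant_of_mapsTo
    (isDiscrete_iff_discreteTopology.2 (NormedSpace.discreteTopology_zmultiples _))
    (hgc.sub hgc') hdiff (left_mem_Icc.2 zero_le_one) (right_mem_Icc.2 zero_le_one)
  have h : (2 * π * I : ℂ) * m = 2 * π * I * n := by
    simp only [Pi.sub_apply] at hconst
    linear_combination hg' - hg - hconst
  exact_mod_cast mul_left_cancel₀ two_pi_I_ne_zero h

theorem hasWindingNumber_zero_of_norm_lt {γ : ℝ → ℂ} {q : ℂ}
    (hγ : IsClosedCurveIn γ {w | ‖w‖ < ‖q‖}) : HasWindingNumber γ q 0 := by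
  obtain ⟨hc, h01, hlt⟩ := hγ
  have hq : q ≠ 0 := by
    rintro rfl
    exact (norm_nonneg _).not_gt (by simpa using hlt 0 (left_mem_Icc.2 zero_le_one))
  have hslit : ∀ t ∈ Icc (0:ℝ) 1, 1 - γ t / q ∈ slitPlane := fun t ht => by
    rw [sub_eq_add_neg]
    refine mem_slitPlane_of_norm_lt_one ?_
    rw [norm_neg, norm_div, div_lt_one (norm_pos_iff.2 hq)]
    exact hlt t ht
  refine ⟨fun t => log (-q) + log (1 - γ t / q), ?_, fun t ht => ?_, by simp [h01]⟩
  · exact continuousOn_const.add ((continuousOn_const.sub (hc.div_const q)).clog hslit)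
  · rw [exp_add, exp_log (neg_ne_zero.2 hq), exp_log (slitPlane_ne_zero (hslit t ht))]
    field_simp
    ring

theorem HasWindingNumber.of_norm_lt {γ : ℝ → ℂ} {q : ℂ} {n : ℤ} (h : HasWindingNumber γ 0 n)
    (hγ : IsClosedCurveIn γ {w | ‖q‖ < ‖w‖}) : HasWindingNumber γ q n := by
  obtain ⟨g, hgc, hge, hg⟩ := h
  obtain ⟨hc, h01, hlt⟩ := hγ
  have hγ0 : ∀ t ∈ Icc (0:ℝ) 1, γ t ≠ 0 := fun t ht =>
    norm_pos_iff.1 ((norm_nonneg q).trans_lt (hlt t ht))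
  have hslit : ∀ t ∈ Icc (0:ℝ) 1, 1 - q / γ t ∈ slitPlane := fun t ht => by
    rw [sub_eq_add_neg]
    refine mem_slitPlane_of_norm_lt_one ?_
    rw [norm_neg, norm_div, div_lt_one (norm_pos_iff.2 (hγ0 t ht))]
    exact hlt t ht
  refine ⟨fun t => g t + log (1 - q / γ t), ?_, fun t ht => ?_, ?_⟩
  · exact hgc.add ((continuousOn_const.sub (continuousOn_const.div hc hγ0)).clog hslit)
  · rw [exp_add, ← hge t ht, exp_log (slitPlane_ne_zero (hslit t ht))]
    field_simp [hγ0 t ht]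
    ring
  · simp only [h01]
    linear_combination hg

def circleImage (f : ℂ → ℂ) (ρ : ℝ) (t : ℝ) : ℂ := f (ρ * exp (2 * π * I * t))

theorem circleImage_eq_circleMap (f : ℂ → ℂ) (ρ : ℝ) :
    circleImage f ρ = fun t => f (circleMap 0 ρ (2 * π * t)) := by
  ext t
  simp only [circleImage, circleMap_zero]
  push_cast
  ring_nf

theorem isClosedCurveIn_circleImage {f : ℂ → ℂ} {ρ : ℝ} {A : Set ℂ} (hρ : 0 ≤ ρ)
    (hf : ContinuousOn f (sphere 0 ρ)) (hA : MapsTo f (sphere 0 ρ) A) :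
    IsClosedCurveIn (circleImage f ρ) A := by
  have hmem : ∀ t : ℝ, circleMap 0 ρ (2 * π * t) ∈ sphere 0 ρ := fun t =>
    circleMap_mem_sphere 0 hρ _
  rw [circleImage_eq_circleMap]
  refine ⟨?_, ?_, fun t _ => hA (hmem t)⟩
  · exact (hf.comp_continuous ((continuous_circleMap 0 ρ).comp (continuous_const_mul _))
      hmem).continuousOn
  · simpa using congr_arg f (periodic_circleMap 0 ρ 0).symm

theorem hasWindingNumber_circleImage_id {ρ : ℝ} (hρ : 0 < ρ) :
    HasWindingNumber (circleImage id ρ) 0 1 := by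
  refine ⟨fun t => Real.log ρ + 2 * π * I * t, by fun_prop, fun t _ => ?_, by push_cast; ring⟩
  rw [sub_zero, exp_add, ← ofReal_exp, Real.exp_log hρ]
  rfl

theorem eq_mul_exp_integral_div_of_hasDerivAt {φ φ' : ℝ → ℂ} (hφ : ∀ θ, HasDerivAt φ (φ' θ) θ)
    (hφ' : Continuous φ') (hφ0 : ∀ θ, φ θ ≠ 0) (a b : ℝ) :
    φ b = φ a * exp (∫ θ in a..b, φ' θ / φ θ) := by
  have hk : Continuous fun θ => φ' θ / φ θ :=
    hφ'.div (continuous_iff_continuousAt.2 fun θ => (hφ θ).continuousAt) hφ0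
  set G : ℝ → ℂ := fun x => ∫ θ in a..x, φ' θ / φ θ
  have hG : ∀ x, HasDerivAt G (φ' x / φ x) x := fun x =>
    (hk.integral_hasStrictDerivAt a x).hasDerivAt
  have hF : ∀ x, HasDerivAt (fun x => φ x * exp (-G x)) 0 x := fun x => by
    refine ((hφ x).mul (hG x).neg.cexp).congr_deriv ?_
    field_simp [hφ0 x]
    ring
  have hconst := is_const_of_deriv_eq_zero (fun x => (hF x).differentiableAt)
    (fun x => (hF x).deriv) b a
  simp only [G, intervalIntegral.integral_same, neg_zero, exp_zero, mul_one] at hconst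
  rw [← hconst, mul_assoc, ← exp_add, neg_add_cancel, exp_zero, mul_one]

theorem sphere_subset_closedBall_diff_ball {ρ₁ ρ₂ ρ : ℝ} (h₁ : ρ₁ ≤ ρ) (h₂ : ρ ≤ ρ₂) :
    sphere (0 : ℂ) ρ ⊆ closedBall 0 ρ₂ \ ball 0 ρ₁ := fun ζ hζ => by
  rw [mem_sphere_zero_iff_norm] at hζ
  simp [hζ, h₁, h₂]

theorem isPreconnected_norm_preimage_Ioo {a b : ℝ} (ha : 0 ≤ a) :
    IsPreconnected (norm ⁻¹' Ioo a b : Set ℂ) := by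
  have hpolar : (norm ⁻¹' Ioo a b : Set ℂ) =
      (fun p : ℝ × ℝ => (p.1 : ℂ) * exp (p.2 * I)) '' (Ioo a b ×ˢ univ) := by
    ext ζ
    refine ⟨fun hζ => ⟨(‖ζ‖, arg ζ), ⟨hζ, trivial⟩, norm_mul_exp_arg_mul_I ζ⟩, ?_⟩
    rintro ⟨⟨ρ, θ⟩, ⟨hρ, -⟩, rfl⟩
    simpa [norm_exp_ofReal_mul_I, abs_of_pos (ha.trans_lt hρ.1)] using hρ
  rw [hpolar]
  exact (isPreconnected_Ioo.prod isPreconnected_univ).image _ (by fun_prop)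

theorem exists_norm_gt_of_injOn {U K : Set ℂ} {f : ℂ → ℂ} (hU : IsOpen U)
    (hUc : IsPreconnected U) (hf : DifferentiableOn ℂ f U) (hinj : InjOn f U)
    (hnt : U.Nontrivial) (hK : IsCompact K) (hKU : K ⊆ U) :
    ∃ w ∈ U, ∀ ζ ∈ K, ‖f ζ‖ < ‖f w‖ := by
  rcases K.eq_empty_or_nonempty with rfl | hKne
  · obtain ⟨w, hw⟩ := hnt.nonempty
    exact ⟨w, hw, by simp⟩
  obtain ⟨ζ₀, hζ₀, hmax⟩ := hK.exists_isMaxOn hKne (hf.continuousOn.mono hKU).norm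
  by_contra! hle
  have hmaxU : IsMaxOn (norm ∘ f) U ζ₀ := fun w hw => by
    obtain ⟨ζ, hζ, h⟩ := hle w hw
    exact h.trans (hmax hζ)
  have hconst := Complex.eqOn_of_isPreconnected_of_isMaxOn_norm hUc hU hf (hKU hζ₀) hmaxU
  obtain ⟨a, ha, b, hb, hab⟩ := hnt
  exact hab (hinj ha hb ((hconst ha).trans (hconst hb).symm))

theorem exists_norm_lt_of_injOn {U K : Set ℂ} {f : ℂ → ℂ} (hU : IsOpen U)
    (hUc : IsPreconnected U) (hf : DifferentiableOn ℂ f U) (hinj : InjOn f U)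
    (hf0 : ∀ ζ ∈ U, f ζ ≠ 0) (hnt : U.Nontrivial) (hK : IsCompact K) (hKU : K ⊆ U) :
    ∃ w ∈ U, ∀ ζ ∈ K, ‖f w‖ < ‖f ζ‖ := by
  obtain ⟨w, hw, h⟩ := exists_norm_gt_of_injOn hU hUc (hf.inv hf0)
    (fun a ha b hb hab => hinj ha hb (inv_injective hab)) hnt hK hKU
  refine ⟨w, hw, fun ζ hζ => ?_⟩
  simpa [inv_lt_inv₀ (norm_pos_iff.2 (hf0 _ (hKU hζ))) (norm_pos_iff.2 (hf0 w hw))] using h ζ hζ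

/-- `2πi` times the index of `f ∘ C(0, ρ)` about `q`. -/
def windingIntegral (f : ℂ → ℂ) (ρ : ℝ) (q : ℂ) : ℂ := ∮ ζ in C(0, ρ), deriv f ζ / (f ζ - q)

section windingIntegral

variable {U : Set ℂ} {f : ℂ → ℂ} {ρ : ℝ} {q : ℂ}

theorem exists_hasWindingNumber_circleImage (hU : IsOpen U) (hf : DifferentiableOn ℂ f U)
    (hρ : 0 ≤ ρ) (hsph : sphere 0 ρ ⊆ U) (hq : q ∉ f '' sphere 0 ρ) :
    ∃ n : ℤ, windingIntegral f ρ q = 2 * π * I * n ∧ HasWindingNumber (circleImage f ρ) q n := by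
  have hmem : ∀ θ, circleMap 0 ρ θ ∈ U := fun θ => hsph (circleMap_mem_sphere 0 hρ θ)
  set φ : ℝ → ℂ := fun θ => f (circleMap 0 ρ θ) - q
  set φ' : ℝ → ℂ := fun θ => deriv f (circleMap 0 ρ θ) * (circleMap 0 ρ θ * I)
  have hφ : ∀ θ, HasDerivAt φ (φ' θ) θ := fun θ =>
    ((hf.differentiableAt (hU.mem_nhds (hmem θ))).hasDerivAt.comp θ
      (hasDerivAt_circleMap 0 ρ θ)).sub_const q
  have hφ' : Continuous φ' :=
    ((hf.deriv hU).continuousOn.comp_continuous (continuous_circleMap 0 ρ) hmem).mul (by fun_prop)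
  have hφ0 : ∀ θ, φ θ ≠ 0 := fun θ =>
    sub_ne_zero.2 fun h => hq ⟨_, circleMap_mem_sphere 0 hρ θ, h⟩
  have hk : Continuous fun θ => φ' θ / φ θ :=
    hφ'.div (continuous_iff_continuousAt.2 fun θ => (hφ θ).continuousAt) hφ0
  have hW : windingIntegral f ρ q = ∫ θ in 0..2 * π, φ' θ / φ θ := by
    simp only [windingIntegral, circleIntegral, deriv_circleMap, smul_eq_mul, φ, φ']
    congr 1
    ext θ
    ring
  obtain ⟨n, hn⟩ : ∃ n : ℤ, windingIntegral f ρ q = n * (2 * π * I) := by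
    refine exp_eq_one_iff.1 (mul_left_cancel₀ (hφ0 0) ?_)
    rw [hW, mul_one, ← eq_mul_exp_integral_div_of_hasDerivAt hφ hφ' hφ0]
    simpa [φ] using congr_arg (f · - q) (periodic_circleMap 0 ρ 0)
  refine ⟨n, by rw [hn]; ring, fun t => log (φ 0) + ∫ θ in 0..2 * π * t, φ' θ / φ θ,
    ?_, fun t _ => ?_, ?_⟩
  · exact (continuous_const.add ((intervalIntegral.continuous_primitive
      (fun a b => hk.intervalIntegrable a b) 0).comp (continuous_const_mul _))).continuousOn
  · rw [circleImage_eq_circleMap, exp_add, exp_log (hφ0 0),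
      ← eq_mul_exp_integral_div_of_hasDerivAt hφ hφ' hφ0]
  · simp only [mul_one, mul_zero, intervalIntegral.integral_same, ← hW, hn]
    ring

theorem hasWindingNumber_circleImage_iff (hU : IsOpen U) (hf : DifferentiableOn ℂ f U)
    (hρ : 0 ≤ ρ) (hsph : sphere 0 ρ ⊆ U) (hq : q ∉ f '' sphere 0 ρ) {n : ℤ} :
    HasWindingNumber (circleImage f ρ) q n ↔ windingIntegral f ρ q = 2 * π * I * n := by
  obtain ⟨m, hm, hwm⟩ := exists_hasWindingNumber_circleImage hU hf hρ hsph hq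
  rw [hm]
  refine ⟨fun h => by rw [hwm.unique h], fun h => ?_⟩
  rwa [← show m = n by exact_mod_cast mul_left_cancel₀ two_pi_I_ne_zero h]

theorem continuousOn_windingIntegral (hU : IsOpen U) (hf : DifferentiableOn ℂ f U)
    (hρ : 0 ≤ ρ) (hsph : sphere 0 ρ ⊆ U) :
    ContinuousOn (windingIntegral f ρ) (f '' sphere 0 ρ)ᶜ := by
  have hmem : ∀ θ, circleMap 0 ρ θ ∈ U := fun θ => hsph (circleMap_mem_sphere 0 hρ θ)
  have hc : Continuous fun p : ((f '' sphere 0 ρ)ᶜ : Set ℂ) × ℝ => circleMap 0 ρ p.2 :=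
    (continuous_circleMap 0 ρ).comp continuous_snd
  rw [continuousOn_iff_continuous_domRestrict]
  refine intervalIntegral.continuous_parametric_intervalIntegral_of_continuous'
    (f := fun (q : ((f '' sphere 0 ρ)ᶜ : Set ℂ)) θ =>
      deriv (circleMap 0 ρ) θ • (deriv f (circleMap 0 ρ θ) / (f (circleMap 0 ρ θ) - q))) ?_ _ _
  simp only [Function.uncurry_def, deriv_circleMap, smul_eq_mul]
  refine (hc.mul continuous_const).mul (((hf.deriv hU).continuousOn.comp_continuous hc
    fun _ => hmem _).div ((hf.continuousOn.comp_continuous hc fun _ => hmem _).sub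
      (continuous_subtype_val.comp continuous_fst)) fun p => ?_)
  exact sub_ne_zero.2 fun h => p.1.2 ⟨_, circleMap_mem_sphere 0 hρ _, h⟩

theorem windingIntegral_eq_of_isPreconnected {X : Type*} [TopologicalSpace X] {S : Set X}
    {p : X → ℂ} (hU : IsOpen U) (hf : DifferentiableOn ℂ f U) (hρ : 0 ≤ ρ)
    (hsph : sphere 0 ρ ⊆ U) (hS : IsPreconnected S) (hp : ContinuousOn p S)
    (hpS : MapsTo p S (f '' sphere 0 ρ)ᶜ) {x y : X} (hx : x ∈ S) (hy : y ∈ S) :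
    windingIntegral f ρ (p x) = windingIntegral f ρ (p y) := by
  refine hS.constant_of_mapsTo (f := fun x => windingIntegral f ρ (p x))
    (isDiscrete_iff_discreteTopology.2 (NormedSpace.discreteTopology_zmultiples (2 * π * I)))
    ((continuousOn_windingIntegral hU hf hρ hsph).comp hp hpS) (fun x hx => ?_) hx hy
  obtain ⟨n, hn, -⟩ := exists_hasWindingNumber_circleImage hU hf hρ hsph (hpS hx)
  exact ⟨n, by simp [hn]; ring⟩

theorem circleIntegral_eq_of_differentiableOn {g : ℂ → ℂ} {ρ₁ ρ₂ : ℝ} (hU : IsOpen U)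
    (hg : DifferentiableOn ℂ g U) (h₁ : 0 < ρ₁) (h₁₂ : ρ₁ ≤ ρ₂)
    (hann : closedBall 0 ρ₂ \ ball 0 ρ₁ ⊆ U) :
    (∮ ζ in C(0, ρ₂), g ζ) = ∮ ζ in C(0, ρ₁), g ζ :=
  circleIntegral_eq_of_differentiable_on_annulus_off_countable h₁ h₁₂ countable_empty
    (hg.continuousOn.mono hann) fun _ hζ => hg.differentiableAt (hU.mem_nhds
      (hann ⟨ball_subset_closedBall hζ.1.1, fun h => hζ.1.2 (ball_subset_closedBall h)⟩))

theorem windingIntegral_eq_of_closedBall_diff_ball {ρ₁ ρ₂ : ℝ} (hU : IsOpen U)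
    (hf : DifferentiableOn ℂ f U) (h₁ : 0 < ρ₁) (h₁₂ : ρ₁ ≤ ρ₂)
    (hann : closedBall 0 ρ₂ \ ball 0 ρ₁ ⊆ U) (hq : q ∉ f '' (closedBall 0 ρ₂ \ ball 0 ρ₁)) :
    windingIntegral f ρ₂ q = windingIntegral f ρ₁ q := by
  refine circleIntegral_eq_of_differentiableOn
    (hf.continuousOn.isOpen_inter_preimage hU isOpen_compl_singleton) ?_ h₁ h₁₂
    fun ζ hζ => ⟨hann hζ, fun h => hq ⟨ζ, hζ, h⟩⟩
  exact ((hf.deriv hU).mono inter_subset_left).div ((hf.mono inter_subset_left).sub_const q)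
    fun ζ hζ => sub_ne_zero.2 hζ.2

theorem exists_sub_eq_pow_mul_of_injOn {w : ℂ} (hU : IsOpen U) (hf : DifferentiableOn ℂ f U)
    (hinj : InjOn f U) (hw : w ∈ U) :
    ∃ m : ℕ, 0 < m ∧ ∃ h : ℂ → ℂ, DifferentiableOn ℂ h U ∧ (∀ ζ ∈ U, h ζ ≠ 0) ∧
      ∀ ζ ∈ U, f ζ - f w = (ζ - w) ^ m * h ζ := by
  have hfw : AnalyticAt ℂ (fun ζ => f ζ - f w) w :=
    (hf.analyticOnNhd hU w hw).sub analyticAt_const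
  have hord : analyticOrderAt (fun ζ => f ζ - f w) w ≠ ⊤ := by
    rw [Ne, analyticOrderAt_eq_top]
    intro hev
    obtain ⟨ζ, ⟨hζ0, hζU⟩, hζw⟩ := (((hev.and (hU.eventually_mem hw)).filter_mono
      nhdsWithin_le_nhds).and (self_mem_nhdsWithin (s := {w}ᶜ))).exists
    exact hζw (hinj hζU hw (sub_eq_zero.1 hζ0))
  obtain ⟨m, hm⟩ := WithTop.ne_top_iff_exists.1 hord
  obtain ⟨g, hg, hgw, hfg⟩ := hfw.analyticOrderAt_eq_natCast.1 hm.symm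
  have hm0 : 0 < m := by
    rw [Nat.pos_iff_ne_zero]
    rintro rfl
    exact hgw (by simpa using hfg.self_of_nhds.symm)
  set h := Function.update (fun ζ => (f ζ - f w) / (ζ - w) ^ m) w (g w)
  have hoff : ∀ ζ ≠ w, h =ᶠ[𝓝 ζ] fun ζ => (f ζ - f w) / (ζ - w) ^ m := fun ζ hζ => by
    filter_upwards [isOpen_ne.mem_nhds hζ] with ξ hξ
    exact Function.update_of_ne hξ _ _
  have hnear : h =ᶠ[𝓝 w] g := by
    filter_upwards [hfg] with ζ hζ
    rcases eq_or_ne ζ w with rfl | hζw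
    · simp [h]
    · rw [(hoff ζ hζw).eq_of_nhds, hζ, smul_eq_mul,
        mul_div_cancel_left₀ _ (pow_ne_zero _ (sub_ne_zero.2 hζw))]
  refine ⟨m, hm0, h, fun ζ hζ => ?_, fun ζ hζ => ?_, fun ζ hζ => ?_⟩
  · rcases eq_or_ne ζ w with rfl | hζw
    · exact (hg.differentiableAt.congr_of_eventuallyEq hnear).differentiableWithinAt
    · refine (DifferentiableAt.congr_of_eventuallyEq ?_ (hoff ζ hζw)).differentiableWithinAt
      exact ((hf.differentiableAt (hU.mem_nhds hζ)).sub_const _).div (by fun_prop)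
        (pow_ne_zero _ (sub_ne_zero.2 hζw))
  · rcases eq_or_ne ζ w with rfl | hζw
    · simpa [h] using hgw
    · rw [(hoff ζ hζw).eq_of_nhds]
      exact div_ne_zero (sub_ne_zero.2 fun he => hζw (hinj hζ hw he))
        (pow_ne_zero _ (sub_ne_zero.2 hζw))
  · rcases eq_or_ne ζ w with rfl | hζw
    · simp [zero_pow hm0.ne']
    · rw [(hoff ζ hζw).eq_of_nhds, mul_div_cancel₀ _ (pow_ne_zero _ (sub_ne_zero.2 hζw))]

theorem windingIntegral_apply_eq_of_mem_annulus {a b : ℝ} {w w' : ℂ}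
    (hU : IsOpen U) (hf : DifferentiableOn ℂ f U) (hinj : InjOn f U) (hρ : 0 ≤ ρ)
    (hsph : sphere 0 ρ ⊆ U) (ha : 0 ≤ a) (hab : norm ⁻¹' Ioo a b ⊆ U) (hρab : ρ ∉ Ioo a b)
    (hw : ‖w‖ ∈ Ioo a b) (hw' : ‖w'‖ ∈ Ioo a b) :
    windingIntegral f ρ (f w) = windingIntegral f ρ (f w') := by
  refine windingIntegral_eq_of_isPreconnected hU hf hρ hsph (isPreconnected_norm_preimage_Ioo ha)
    (hf.continuousOn.mono hab) (fun ζ hζ ⟨ξ, hξ, he⟩ => hρab ?_) hw hw'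
  rwa [← mem_sphere_zero_iff_norm.1 hξ, hinj (hsph hξ) (hab hζ) he]

theorem exists_windingIntegral_sub_windingIntegral_eq {w : ℂ} {ρ₁ ρ₂ : ℝ} (hU : IsOpen U)
    (hf : DifferentiableOn ℂ f U) (hinj : InjOn f U) (hann : closedBall 0 ρ₂ \ ball 0 ρ₁ ⊆ U)
    (h₁ : 0 < ρ₁) (hw₁ : ρ₁ < ‖w‖) (hw₂ : ‖w‖ < ρ₂) :
    ∃ m : ℕ, 0 < m ∧
      windingIntegral f ρ₂ (f w) - windingIntegral f ρ₁ (f w) = 2 * π * I * m := by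
  obtain ⟨m, hm, h, hhd, hh0, hfh⟩ := exists_sub_eq_pow_mul_of_injOn hU hf hinj
    (hann (sphere_subset_closedBall_diff_ball hw₁.le hw₂.le (mem_sphere_zero_iff_norm.2 rfl)))
  have hlog : ∀ ζ ∈ U, ζ ≠ w →
      deriv f ζ / (f ζ - f w) = m * (ζ - w)⁻¹ + deriv h ζ / h ζ := fun ζ hζ hζw => by
    have hloc : (fun ξ => f ξ - f w) =ᶠ[𝓝 ζ] fun ξ => (ξ - w) ^ m * h ξ :=
      Filter.eventually_of_mem (hU.mem_nhds hζ) hfh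
    have := logDeriv_mul (f := fun ξ => (ξ - w) ^ m) ζ (pow_ne_zero m (sub_ne_zero.2 hζw))
      (hh0 ζ hζ) (by fun_prop) (hhd.differentiableAt (hU.mem_nhds hζ))
    rw [logDeriv_fun_pow (by fun_prop), logDeriv_apply, logDeriv_apply, logDeriv_apply,
      ← hloc.deriv_eq, ← hfh ζ hζ, deriv_sub_const] at this
    simpa [div_eq_mul_inv] using this
  -- `h'/h` is holomorphic on the closed annulus, so only `m / (ζ - w)` tells the circles apart
  have hsplit : ∀ ρ, ρ₁ ≤ ρ → ρ ≤ ρ₂ → ρ ≠ ‖w‖ → windingIntegral f ρ (f w) =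
      m * (∮ ζ in C(0, ρ), (ζ - w)⁻¹) + ∮ ζ in C(0, ρ), deriv h ζ / h ζ := by
    intro ρ hρ₁ hρ₂ hρw
    have hsph : sphere 0 ρ ⊆ U := (sphere_subset_closedBall_diff_ball hρ₁ hρ₂).trans hann
    have hne : ∀ ζ ∈ sphere (0 : ℂ) ρ, ζ - w ≠ 0 := fun ζ hζ => sub_ne_zero.2 <| by
      rintro rfl
      exact hρw (mem_sphere_zero_iff_norm.1 hζ).symm
    rw [windingIntegral, circleIntegral.integral_congr (h₁.trans_le hρ₁).le
      fun ζ hζ => hlog ζ (hsph hζ) (sub_ne_zero.1 (hne ζ hζ)), circleIntegral.integral_add,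
      circleIntegral.integral_const_mul]
    · exact (continuousOn_const.mul ((continuousOn_id.sub continuousOn_const).inv₀ hne)
        ).circleIntegrable (h₁.trans_le hρ₁).le
    · exact (((hhd.deriv hU).continuousOn.mono hsph).div (hhd.continuousOn.mono hsph)
        fun ζ hζ => hh0 ζ (hsph hζ)).circleIntegrable (h₁.trans_le hρ₁).le
  have hw : ∀ ζ ∈ closedBall (0 : ℂ) ρ₁, ζ - w ≠ 0 := fun ζ hζ => sub_ne_zero.2 <| by
    rintro rfl
    exact (mem_closedBall_zero_iff.1 hζ).not_gt hw₁
  have hinner : (∮ ζ in C(0, ρ₁), (ζ - w)⁻¹) = 0 :=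
    circleIntegral_eq_zero_of_differentiable_on_off_countable h₁.le countable_empty
      ((continuousOn_id.sub continuousOn_const).inv₀ hw) fun ζ hζ =>
        (differentiableAt_id.sub_const w).inv (hw ζ (ball_subset_closedBall hζ.1))
  have houter : (∮ ζ in C(0, ρ₂), (ζ - w)⁻¹) = 2 * π * I :=
    circleIntegral.integral_sub_inv_of_mem_ball (mem_ball_zero_iff.2 hw₂)
  have hh : (∮ ζ in C(0, ρ₂), deriv h ζ / h ζ) = ∮ ζ in C(0, ρ₁), deriv h ζ / h ζ :=
    circleIntegral_eq_of_differentiableOn hU ((hhd.deriv hU).div hhd hh0) h₁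
      (hw₁.trans hw₂).le hann
  refine ⟨m, hm, ?_⟩
  rw [hsplit ρ₂ (hw₁.trans hw₂).le le_rfl hw₂.ne', hsplit ρ₁ le_rfl (hw₁.trans hw₂).le hw₁.ne,
    hinner, houter, hh]
  ring

end windingIntegral

section stdAnnulus

variable {r R : ℝ} {f : ℂ → ℂ}

theorem isOpen_stdAnnulus (r : ℝ) : IsOpen (stdAnnulus r) :=
  isOpen_Ioo.preimage continuous_norm

theorem sphere_subset_stdAnnulus (hrR : r < R) (hR : R < 1) : sphere 0 R ⊆ stdAnnulus r :=
  fun ζ hζ => by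
    rw [mem_sphere_zero_iff_norm] at hζ
    exact ⟨hζ ▸ hrR, hζ ▸ hR⟩

theorem isPreconnected_stdAnnulus (hr : 0 ≤ r) : IsPreconnected (stdAnnulus r) :=
  isPreconnected_norm_preimage_Ioo hr

theorem stdAnnulus_nontrivial (hr : 0 ≤ r) (hr1 : r < 1) : (stdAnnulus r).Nontrivial := by
  obtain ⟨s, hrs, hs1⟩ := exists_between hr1
  have hs : ‖(s : ℂ)‖ = s := by simp [abs_of_pos (hr.trans_lt hrs)]
  refine ⟨s, ⟨by rwa [hs], by rwa [hs]⟩, -s, ⟨by rwa [norm_neg, hs], by rwa [norm_neg, hs]⟩, ?_⟩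
  exact self_ne_neg.2 (ofReal_ne_zero.2 (hr.trans_lt hrs).ne')

theorem apply_notMem_image_sphere (hinj : InjOn f (stdAnnulus r)) (hrR : r < R) (hR : R < 1)
    {ζ : ℂ} (hζ : ζ ∈ stdAnnulus r) (hζR : ‖ζ‖ ≠ R) : f ζ ∉ f '' sphere 0 R :=
  fun ⟨ξ, hξ, he⟩ => hζR <| by
    rw [← hinj (sphere_subset_stdAnnulus hrR hR hξ) hζ he, mem_sphere_zero_iff_norm.1 hξ]

theorem eq_of_hasWindingNumber_circleImage (hr : 0 ≤ r) (hf : DifferentiableOn ℂ f (stdAnnulus r))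
    (hinj : InjOn f (stdAnnulus r)) (hrR : r < R) (hR : R < 1) {w w' : ℂ}
    (hw : w ∈ stdAnnulus r) (hw' : w' ∈ stdAnnulus r)
    (hside : (‖w‖ < R ∧ ‖w'‖ < R) ∨ (R < ‖w‖ ∧ R < ‖w'‖)) {m n : ℤ}
    (hm : HasWindingNumber (circleImage f R) (f w) m)
    (hn : HasWindingNumber (circleImage f R) (f w') n) : m = n := by
  have hR0 : 0 ≤ R := hr.trans hrR.le
  have hsph := sphere_subset_stdAnnulus hrR hR
  have hwR : ‖w‖ ≠ R ∧ ‖w'‖ ≠ R := by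
    rcases hside with ⟨h, h'⟩ | ⟨h, h'⟩
    exacts [⟨h.ne, h'.ne⟩, ⟨h.ne', h'.ne'⟩]
  rw [hasWindingNumber_circleImage_iff (isOpen_stdAnnulus r) hf hR0 hsph
    (apply_notMem_image_sphere hinj hrR hR hw hwR.1)] at hm
  rw [hasWindingNumber_circleImage_iff (isOpen_stdAnnulus r) hf hR0 hsph
    (apply_notMem_image_sphere hinj hrR hR hw' hwR.2)] at hn
  have heq : windingIntegral f R (f w) = windingIntegral f R (f w') := by
    rcases hside with ⟨h, h'⟩ | ⟨h, h'⟩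
    · exact windingIntegral_apply_eq_of_mem_annulus (isOpen_stdAnnulus r) hf hinj hR0 hsph hr
        (fun ζ hζ => ⟨hζ.1, hζ.2.trans hR⟩) (fun h => h.2.false) ⟨hw.1, h⟩ ⟨hw'.1, h'⟩
    · exact windingIntegral_apply_eq_of_mem_annulus (isOpen_stdAnnulus r) hf hinj hR0 hsph
        (hr.trans hrR.le) (fun ζ hζ => ⟨hrR.trans hζ.1, hζ.2⟩) (fun h => h.1.false)
        ⟨h, hw.2⟩ ⟨h', hw'.2⟩
  rw [hm, hn] at heq
  exact_mod_cast mul_left_cancel₀ two_pi_I_ne_zero heq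

theorem lt_of_hasWindingNumber_circleImage (hr : 0 ≤ r)
    (hf : DifferentiableOn ℂ f (stdAnnulus r)) (hinj : InjOn f (stdAnnulus r)) (hrR : r < R)
    {w₁ w₂ : ℂ} (hw₁ : w₁ ∈ stdAnnulus r) (hw₂ : w₂ ∈ stdAnnulus r) (h₁ : ‖w₁‖ < R)
    (h₂ : R < ‖w₂‖) {n₁ n₂ : ℤ} (hn₁ : HasWindingNumber (circleImage f R) (f w₁) n₁)
    (hn₂ : HasWindingNumber (circleImage f R) (f w₂) n₂) : n₂ < n₁ := by
  have hR0 : 0 < R := (norm_nonneg _).trans_lt h₁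
  have hR1 : R < 1 := h₂.trans hw₂.2
  obtain ⟨ρ, hw₂ρ, hρ1⟩ := exists_between hw₂.2
  have hann : closedBall 0 ρ \ ball 0 R ⊆ stdAnnulus r := fun ζ hζ => by
    simp only [Set.mem_sdiff, mem_closedBall_zero_iff, mem_ball_zero_iff, not_lt] at hζ
    exact ⟨hrR.trans_le hζ.2, hζ.1.trans_lt hρ1⟩
  obtain ⟨m, hm, hcross⟩ := exists_windingIntegral_sub_windingIntegral_eq (isOpen_stdAnnulus r)
    hf hinj hann hR0 h₂ hw₂ρ
  -- move `f w₂` to `f w₁` inside `C(0, ρ)`, then shrink `C(0, ρ)` back to `C(0, R)`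
  have hside : windingIntegral f ρ (f w₂) = windingIntegral f ρ (f w₁) :=
    windingIntegral_apply_eq_of_mem_annulus (isOpen_stdAnnulus r) hf hinj
      (hR0.trans (h₂.trans hw₂ρ)).le (sphere_subset_stdAnnulus (hw₂.1.trans hw₂ρ) hρ1) hr
      (fun ζ hζ => ⟨hζ.1, hζ.2.trans hρ1⟩) (fun h => h.2.false) ⟨hw₂.1, hw₂ρ⟩
      ⟨hw₁.1, h₁.trans (h₂.trans hw₂ρ)⟩
  have hshrink : windingIntegral f ρ (f w₁) = windingIntegral f R (f w₁) := by
    refine windingIntegral_eq_of_closedBall_diff_ball (isOpen_stdAnnulus r) hf hR0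
      (h₂.trans hw₂ρ).le hann fun ⟨ξ, hξ, he⟩ => hξ.2 ?_
    rw [mem_ball_zero_iff, hinj (hann hξ) hw₁ he]
    exact h₁
  have hsph := sphere_subset_stdAnnulus hrR hR1
  rw [hasWindingNumber_circleImage_iff (isOpen_stdAnnulus r) hf hR0.le hsph
    (apply_notMem_image_sphere hinj hrR hR1 hw₁ h₁.ne)] at hn₁
  rw [hasWindingNumber_circleImage_iff (isOpen_stdAnnulus r) hf hR0.le hsph
    (apply_notMem_image_sphere hinj hrR hR1 hw₂ h₂.ne')] at hn₂
  rw [hside, hshrink, hn₁, hn₂] at hcross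
  have hdiff : ((n₁ - n₂ : ℤ) : ℂ) = m :=
    mul_left_cancel₀ two_pi_I_ne_zero (by push_cast; linear_combination hcross)
  have : n₁ - n₂ = m := by exact_mod_cast hdiff
  omega

theorem exists_gt_forall_hasWindingNumber_circleImage_eq_or_eq (hr : 0 ≤ r)
    (hf : DifferentiableOn ℂ f (stdAnnulus r)) (hinj : InjOn f (stdAnnulus r)) (hrR : r < R)
    {z : ℂ} (hz : z ∈ stdAnnulus r) (hRz : R < ‖z‖) {n : ℤ}
    (hn : HasWindingNumber (circleImage f R) (f z) n) :
    ∃ n₀ : ℤ, n < n₀ ∧ ∀ ζ ∈ stdAnnulus r, ‖ζ‖ ≠ R → ∀ k : ℤ,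
      HasWindingNumber (circleImage f R) (f ζ) k → k = n ∨ k = n₀ := by
  have hR1 : R < 1 := hRz.trans hz.2
  obtain ⟨s, hrs, hsR⟩ := exists_between hrR
  have hs : ‖(s : ℂ)‖ = s := by simp [abs_of_pos (hr.trans_lt hrs)]
  have hsR' : ‖(s : ℂ)‖ < R := by rwa [hs]
  have hsA : (s : ℂ) ∈ stdAnnulus r := ⟨by rwa [hs], hsR'.trans hR1⟩
  obtain ⟨n₀, -, hn₀⟩ := exists_hasWindingNumber_circleImage (isOpen_stdAnnulus r) hf
    (hr.trans hrR.le) (sphere_subset_stdAnnulus hrR hR1)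
    (apply_notMem_image_sphere hinj hrR hR1 hsA hsR'.ne)
  refine ⟨n₀, lt_of_hasWindingNumber_circleImage hr hf hinj hrR hsA hz hsR' hRz hn₀ hn,
    fun ζ hζ hζR k hk => ?_⟩
  rcases hζR.lt_or_gt with h | h
  · exact .inr (eq_of_hasWindingNumber_circleImage hr hf hinj hrR hR1 hζ hsA (.inl ⟨h, hsR'⟩)
      hk hn₀)
  · exact .inl (eq_of_hasWindingNumber_circleImage hr hf hinj hrR hR1 hζ hz (.inr ⟨h, hRz⟩)
      hk hn)

theorem exists_hasWindingNumber_circleImage_eq_zero (hr : 0 ≤ r)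
    (hf : DifferentiableOn ℂ f (stdAnnulus r)) (hinj : InjOn f (stdAnnulus r)) (hrR : r < R)
    (hR : R < 1) : ∃ w ∈ stdAnnulus r, ‖w‖ ≠ R ∧ HasWindingNumber (circleImage f R) (f w) 0 := by
  have hsph := sphere_subset_stdAnnulus hrR hR
  obtain ⟨w, hw, hbig⟩ := exists_norm_gt_of_injOn (isOpen_stdAnnulus r)
    (isPreconnected_stdAnnulus hr) hf hinj (stdAnnulus_nontrivial hr (hrR.trans hR))
    (isCompact_sphere 0 R) hsph
  exact ⟨w, hw, fun h => (hbig w (mem_sphere_zero_iff_norm.2 h)).false,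
    hasWindingNumber_zero_of_norm_lt (isClosedCurveIn_circleImage (hr.trans hrR.le)
      (hf.continuousOn.mono hsph) fun ζ hζ => hbig ζ hζ)⟩

theorem exists_hasWindingNumber_circleImage_eq_one (hr : 0 ≤ r)
    (hf : DifferentiableOn ℂ f (stdAnnulus r)) (hinj : InjOn f (stdAnnulus r))
    (hf0 : ∀ ζ ∈ stdAnnulus r, f ζ ≠ 0) (hwind : PreservesWinding f (stdAnnulus r))
    (hrR : r < R) (hR : R < 1) :
    ∃ w ∈ stdAnnulus r, ‖w‖ ≠ R ∧ HasWindingNumber (circleImage f R) (f w) 1 := by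
  have hR0 : 0 < R := hr.trans_lt hrR
  have hsph := sphere_subset_stdAnnulus hrR hR
  obtain ⟨w, hw, hsmall⟩ := exists_norm_lt_of_injOn (isOpen_stdAnnulus r)
    (isPreconnected_stdAnnulus hr) hf hinj hf0 (stdAnnulus_nontrivial hr (hrR.trans hR))
    (isCompact_sphere 0 R) hsph
  have hf1 : HasWindingNumber (circleImage f R) 0 1 :=
    (hwind _ (isClosedCurveIn_circleImage hR0.le continuousOn_id hsph) 1).1
      (hasWindingNumber_circleImage_id hR0)
  exact ⟨w, hw, fun h => (hsmall w (mem_sphere_zero_iff_norm.2 h)).false,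
    hf1.of_norm_lt (isClosedCurveIn_circleImage hR0.le (hf.continuousOn.mono hsph)
      fun ζ hζ => hsmall ζ hζ)⟩

end stdAnnulus

theorem image_in_exterior_of_circle_image_general
    (r : ℝ) (hr0 : 0 < r) (f : ℂ → ℂ)
    (hholo : DifferentiableOn ℂ f (stdAnnulus r)) (hinj : InjOn f (stdAnnulus r))
    (hmaps : MapsTo f (stdAnnulus r) punctPlane)
    (hwind : PreservesWinding f (stdAnnulus r))
    (R : ℝ) (z : ℂ) (hrR : r < R) (hRz : R < ‖z‖)
    (hz1 : ‖z‖ < 1) :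
    HasWindingNumber
      (fun t : ℝ => f ((R : ℂ) * Complex.exp (2 * Real.pi * Complex.I * t)))
      (f z) 0 := by
  have hR1 : R < 1 := hRz.trans hz1
  have hz : z ∈ stdAnnulus r := ⟨hrR.trans hRz, hz1⟩
  obtain ⟨n, -, hn⟩ := exists_hasWindingNumber_circleImage (isOpen_stdAnnulus r) hholo
    (hr0.trans hrR).le (sphere_subset_stdAnnulus hrR hR1)
    (apply_notMem_image_sphere hinj hrR hR1 hz hRz.ne')
  obtain ⟨n₀, hlt, hvalues⟩ :=
    exists_gt_forall_hasWindingNumber_circleImage_eq_or_eq hr0.le hholo hinj hrR hz hRz hn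
  obtain ⟨w₀, hw₀, hw₀R, h₀⟩ :=
    exists_hasWindingNumber_circleImage_eq_zero hr0.le hholo hinj hrR hR1
  obtain ⟨w₁, hw₁, hw₁R, h₁⟩ := exists_hasWindingNumber_circleImage_eq_one hr0.le hholo hinj
    (fun ζ hζ => hmaps hζ) hwind hrR hR1
  have := hvalues w₀ hw₀ hw₀R 0 h₀
  have := hvalues w₁ hw₁ hw₁R 1 h₁
  obtain rfl : n = 0 := by omega
  exact hn

/-- Lemma 4.1: if an injective holomorphic `f : 𝔸_r → ℂ*` preserves winding
numbers, then for `r < R < |z| < 1`, the point `f z` lies in the exterior of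
the Jordan curve `f(C(0,R))`. -/
theorem image_in_exterior_of_circle_image
    (r : ℝ) (hr0 : 0 < r) (hr1 : r < 1) (f : ℂ → ℂ)
    (hholo : DifferentiableOn ℂ f (stdAnnulus r)) (hinj : InjOn f (stdAnnulus r))
    (hmaps : MapsTo f (stdAnnulus r) punctPlane)
    (hwind : PreservesWinding f (stdAnnulus r))
    (R : ℝ) (z : ℂ) (hrR : r < R) (hRz : R < ‖z‖)
    (hz1 : ‖z‖ < 1) :
    HasWindingNumber
      (fun t : ℝ => f ((R : ℂ) * Complex.exp (2 * Real.pi * Complex.I * t)))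
      (f z) 0 :=
  image_in_exterior_of_circle_image_general r hr0 f hholo hinj hmaps hwind R z hrR hRz hz1
end
end
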